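/- arXiv:0801.1632 — 4 statements merged into one kernel-verified Lean document; each statement's English description precedes it below -/
import Mathlib

section
/- An integral domain D is quasi-Prüfer if and only if D_M is a quasi-Prüfer domain for each maximal ideal M of D. -/
open Polynomial

section Aux

/-- `comap C (map C I) = I`. -/
lemma comap_C_map_C {A : Type*} [CommRing A] (I : Ideal A) :
    (I.map (C : A →+* A[X])).comap (C : A →+* A[X]) = I := by
  ext a
  simp only [Ideal.mem_comap, Ideal.mem_map_C_iff]
  constructor
  · intro h
    simpa using h 0
  · intro h n
    rcases eq_or_ne n 0 with rfl | hn
    · simpa using h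
    · simp [coeff_C, hn]

/-- The comap of `I[X]` under `mapRingHom f` is `(I.comap f)[X]`. -/
lemma comap_mapRingHom_map_C {A B : Type*} [CommRing A] [CommRing B] (f : A →+* B)
    (I : Ideal B) :
    (I.map (C : B →+* B[X])).comap (Polynomial.mapRingHom f) =
      (I.comap f).map (C : A →+* A[X]) := by
  ext g
  simp [Ideal.mem_comap, Ideal.mem_map_C_iff, coeff_map]

/-- `map (mapRingHom f) (J[X]) = (map f J)[X]`. -/
lemma map_mapRingHom_map_C {A B : Type*} [CommRing A] [CommRing B] (f : A →+* B)
    (J : Ideal A) :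
    (J.map (C : A →+* A[X])).map (Polynomial.mapRingHom f) =
      (J.map f).map (C : B →+* B[X]) := by
  rw [Ideal.map_map, Ideal.map_map]
  congr 1
  ext a
  simp

theorem isLocalization_polynomial {D R : Type*} [CommRing D] [CommRing R] (M : Submonoid D)
    [Algebra D R] [IsLocalization M R] :
    letI : Algebra D[X] R[X] := (Polynomial.mapRingHom (algebraMap D R)).toAlgebra
    IsLocalization (M.map (C : D →+* D[X])) R[X] := by
  letI : Algebra D[X] R[X] := (Polynomial.mapRingHom (algebraMap D R)).toAlgebra
  have halg : ∀ p : D[X], algebraMap D[X] R[X] p = p.map (algebraMap D R) := fun p => rfl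
  refine ⟨⟨?_, ?_, ?_⟩⟩
  · rintro ⟨p, q, hq, rfl⟩
    rw [halg, Polynomial.map_C]
    exact IsUnit.map _ (IsLocalization.map_units R ⟨q, hq⟩)
  · intro p
    obtain ⟨b, hb⟩ := IsLocalization.integerNormalization_map_to_map M p
    refine ⟨⟨IsLocalization.integerNormalization M p, ⟨C (b : D), ⟨b, b.2, rfl⟩⟩⟩, ?_⟩
    show p * (algebraMap D[X] R[X]) (C (b : D)) = (algebraMap D[X] R[X]) _
    rw [halg, halg, hb, Polynomial.map_C, Algebra.smul_def, Polynomial.algebraMap_apply]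
    ring
  · intro p q h
    simp_rw [halg, Polynomial.ext_iff, coeff_map] at h
    choose c hc using fun n => IsLocalization.exists_of_eq (M := M) (h n)
    classical
    set s : M := ∏ n ∈ p.support ∪ q.support, c n with hs
    refine ⟨⟨C (s : D), ⟨(s : D), s.2, rfl⟩⟩, ?_⟩
    ext n
    simp only [hs, Submonoid.coe_finset_prod]
    simp only [coeff_C_mul]
    by_cases hn : n ∈ p.support ∪ q.support
    · exact Finset.prod_mul_eq_prod_mul_of_exists n hn (hc n)
    · simp only [Finset.mem_union, mem_support_iff, ne_eq, not_or, Decidable.not_not] at hn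
      rw [hn.1, hn.2]

end Aux

/-- Quasi-Prüfer domain: every prime of `D[X]` contained in `P[X]` for some prime `P`
of `D` is extended from `D`. -/
def QuasiPrufer (D : Type*) [CommRing D] : Prop :=
  ∀ P : Ideal D, P.IsPrime → ∀ Q : Ideal (Polynomial D), Q.IsPrime →
    Q ≤ Ideal.map (Polynomial.C : D →+* Polynomial D) P →
    Q = Ideal.map (Polynomial.C : D →+* Polynomial D)
      (Q.comap (Polynomial.C : D →+* Polynomial D))

/-- `D` is quasi-Prüfer iff `D_M` is quasi-Prüfer for each maximal ideal `M`. -/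
theorem quasiPrufer_iff_forall_localization_maximal
    (D : Type*) [CommRing D] [IsDomain D] :
    QuasiPrufer D ↔
      ∀ (M : Ideal D) (_ : M.IsMaximal), QuasiPrufer (Localization.AtPrime M) := by
  constructor
  · -- forward
    intro hQP M hM
    set R := Localization.AtPrime M
    letI : Algebra D[X] R[X] := (Polynomial.mapRingHom (algebraMap D R)).toAlgebra
    haveI hloc : IsLocalization ((M.primeCompl).map (C : D →+* D[X])) R[X] :=
      isLocalization_polynomial M.primeCompl
    intro P' hP' Q' hQ' hle
    set φ : D[X] →+* R[X] := Polynomial.mapRingHom (algebraMap D R) with hφ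
    have hφalg : φ = algebraMap D[X] R[X] := rfl
    set Q : Ideal D[X] := Q'.comap φ with hQdef
    haveI hQprime : Q.IsPrime := Ideal.IsPrime.comap φ
    set P : Ideal D := P'.comap (algebraMap D R) with hPdef
    haveI hPprime : P.IsPrime := Ideal.IsPrime.comap _
    have hQle : Q ≤ Ideal.map (C : D →+* D[X]) P := by
      rw [hQdef, hPdef, ← comap_mapRingHom_map_C]
      exact Ideal.comap_mono hle
    have hQ := hQP P hPprime Q hQprime hQle
    have hmap : Q' = Q.map φ := by
      rw [hQdef, hφalg]
      exact (IsLocalization.map_comap ((M.primeCompl).map (C : D →+* D[X])) R[X] Q').symm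
    set q : Ideal D := Q.comap (C : D →+* D[X]) with hq
    have hQ'eq : Q' = Ideal.map (C : R →+* R[X]) (q.map (algebraMap D R)) := by
      rw [hmap, hQ, map_mapRingHom_map_C]
    rw [hQ'eq, comap_C_map_C]
  · -- backward
    intro h P hP Q hQ hle
    obtain ⟨M, hM, hPM⟩ := Ideal.exists_le_maximal P hP.ne_top
    set R := Localization.AtPrime M
    letI : Algebra D[X] R[X] := (Polynomial.mapRingHom (algebraMap D R)).toAlgebra
    haveI hloc : IsLocalization ((M.primeCompl).map (C : D →+* D[X])) R[X] :=
      isLocalization_polynomial M.primeCompl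
    set φ : D[X] →+* R[X] := Polynomial.mapRingHom (algebraMap D R) with hφ
    have hφalg : φ = algebraMap D[X] R[X] := rfl
    -- disjointness of the multiplicative sets from the primes
    have hdisj : Disjoint (((M.primeCompl).map (C : D →+* D[X])) : Set D[X]) (Q : Set D[X]) := by
      rw [Set.disjoint_left]
      rintro x ⟨s, hs, rfl⟩ hxQ
      exact hs (hPM (by simpa using (Ideal.mem_map_C_iff.mp (hle hxQ)) 0))
    have hdisjP : Disjoint ((M.primeCompl : Submonoid D) : Set D) (P : Set D) := by
      rw [Set.disjoint_left]
      exact fun s hs hsP => hs (hPM hsP)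
    set Q' : Ideal R[X] := Q.map (algebraMap D[X] R[X]) with hQ'def
    haveI hQ'prime : Q'.IsPrime :=
      IsLocalization.isPrime_of_isPrime_disjoint ((M.primeCompl).map (C : D →+* D[X])) R[X]
        Q hQ hdisj
    set P' : Ideal R := P.map (algebraMap D R) with hP'def
    haveI hP'prime : P'.IsPrime :=
      IsLocalization.isPrime_of_isPrime_disjoint M.primeCompl R P hP hdisjP
    have hQ'le : Q' ≤ Ideal.map (C : R →+* R[X]) P' := by
      rw [hQ'def, hP'def, ← hφalg, ← map_mapRingHom_map_C]
      rw [hφalg]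
      exact Ideal.map_mono hle
    have hres := h M hM P' hP'prime Q' hQ'prime hQ'le
    have hQeq : Q = Q'.comap (algebraMap D[X] R[X]) :=
      (IsLocalization.comap_map_of_isPrime_disjoint _ R[X] (I := Q) hQ hdisj).symm
    set q' : Ideal R := Q'.comap (C : R →+* R[X]) with hq'
    have hQext : Q = Ideal.map (C : D →+* D[X]) ((q'.comap (algebraMap D R))) := by
      rw [hQeq, hres, ← hφalg, comap_mapRingHom_map_C]
    rw [hQext, comap_C_map_C]
end

section
/- Let D be an integrally closed domain with quotient field K. Then D is a Prüfer domain if and only if every prime ideal Q of D[X] with content c(Q) a proper ideal of D satisfies Q = (Q ∩ D)[X]. -/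
/-- The content ideal of an ideal of polynomials. -/
def contentIdealOfIdeal {D : Type*} [CommRing D] (J : Ideal (Polynomial D)) : Ideal D :=
  Ideal.span {a : D | ∃ f ∈ J, ∃ n : ℕ, Polynomial.coeff f n = a}

/-- Prüfer domain: every nonzero finitely generated ideal is invertible
(as a fractional ideal). -/
def IsPrueferDomain (D : Type*) [CommRing D] [IsDomain D] : Prop :=
  ∀ I : Ideal D, I ≠ ⊥ → I.FG →
    IsUnit (I : FractionalIdeal (nonZeroDivisors D) (FractionRing D))

open Polynomial

section AuxPruefer

variable {D : Type*} [CommRing D] [IsDomain D]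

/-- Pair invertibility data for two nonzero elements. -/
def PairPropPruefer (D : Type*) [CommRing D] [IsDomain D] : Prop :=
  ∀ a b : D, a ≠ 0 → b ≠ 0 →
    ∃ x y : FractionRing D,
      algebraMap D (FractionRing D) a * x + algebraMap D (FractionRing D) b * y = 1 ∧
      (∃ u, algebraMap D (FractionRing D) u = algebraMap D (FractionRing D) a * x) ∧
      (∃ u, algebraMap D (FractionRing D) u = algebraMap D (FractionRing D) a * y) ∧
      (∃ u, algebraMap D (FractionRing D) u = algebraMap D (FractionRing D) b * x) ∧
      (∃ u, algebraMap D (FractionRing D) u = algebraMap D (FractionRing D) b * y)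

/-- total divisibility in a localization -/
abbrev TotAtPruefer (S : Submonoid D) : Prop :=
  ∀ a b : D,
    algebraMap D (Localization S) a ∣ algebraMap D (Localization S) b ∨
    algebraMap D (Localization S) b ∣ algebraMap D (Localization S) a

omit [CommRing D] [IsDomain D] in
/-- a finite nonempty set has a divisibility-minimal element, given total divisibility. -/
lemma finmin_pruefer {V : Type*} [CommMonoid V] (φ : D → V)
    (tot : ∀ x y : D, φ x ∣ φ y ∨ φ y ∣ φ x) (s : Finset D) (hs : s.Nonempty) :
    ∃ w ∈ s, ∀ c ∈ s, φ w ∣ φ c := by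
  classical
  induction s using Finset.induction_on with
  | empty => exact absurd hs (by simp)
  | @insert a s ha ih =>
    rcases s.eq_empty_or_nonempty with rfl | hne
    · exact ⟨a, by simp, by simp⟩
    · obtain ⟨w, hw, hwd⟩ := ih hne
      rcases tot w a with h | h
      · exact ⟨w, Finset.mem_insert_of_mem hw, fun c hc => by
          rcases Finset.mem_insert.mp hc with rfl | hc
          · exact h
          · exact hwd c hc⟩
      · exact ⟨a, Finset.mem_insert_self a s, fun c hc => by
          rcases Finset.mem_insert.mp hc with rfl | hc
          · exact dvd_rfl
          · exact h.trans (hwd c hc)⟩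

/-- unpack divisibility in the localization at a prime. -/
lemma dvd_unpack_pruefer (M : Ideal D) [M.IsPrime] {w c : D}
    (h : algebraMap D (Localization.AtPrime M) w ∣ algebraMap D (Localization.AtPrime M) c) :
    ∃ t ∉ M, ∃ r : D, t * c = w * r := by
  obtain ⟨z, hz⟩ := h
  obtain ⟨⟨r, t⟩, hrt⟩ := IsLocalization.mk'_surjective M.primeCompl z
  replace hrt : IsLocalization.mk' (Localization.AtPrime M) r t = z := hrt
  refine ⟨t, t.2, r, ?_⟩
  have hinj : Function.Injective (algebraMap D (Localization.AtPrime M)) :=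
    IsLocalization.injective (M := M.primeCompl) (Localization.AtPrime M)
      (fun x hx => mem_nonZeroDivisors_of_ne_zero (fun h0 => hx (h0 ▸ M.zero_mem)))
  apply hinj
  rw [map_mul, map_mul]
  calc algebraMap D (Localization.AtPrime M) ↑t * algebraMap D (Localization.AtPrime M) c
      = algebraMap D (Localization.AtPrime M) w *
        (IsLocalization.mk' (Localization.AtPrime M) r t *
          algebraMap D (Localization.AtPrime M) ↑t) := by rw [hz, ← hrt]; ring
    _ = _ := by rw [IsLocalization.mk'_spec]

omit [IsDomain D] in
lemma coeff_mem_content_pruefer {Q : Ideal (Polynomial D)} {f : Polynomial D}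
    (hf : f ∈ Q) (n : ℕ) : f.coeff n ∈ contentIdealOfIdeal Q :=
  Ideal.subset_span ⟨f, hf, n, rfl⟩

/-- pair invertibility gives total divisibility in each localization at a maximal ideal. -/
lemma pairProp_tot_pruefer (hP : PairPropPruefer D) (M : Ideal D) (hM : M.IsMaximal) :
    TotAtPruefer (@Ideal.primeCompl D _ M hM.isPrime) := by
  intro a b
  haveI : M.IsPrime := hM.isPrime
  rcases eq_or_ne a 0 with rfl | ha
  · right; simp
  rcases eq_or_ne b 0 with rfl | hb
  · left; simp
  obtain ⟨x, y, hsum, ⟨p, hp⟩, ⟨r, hr⟩, ⟨q, hq⟩, ⟨s, hs⟩⟩ := hP a b ha hb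
  have hinjK : Function.Injective (algebraMap D (FractionRing D)) :=
    IsFractionRing.injective D (FractionRing D)
  have hps : p + s = 1 := by
    apply hinjK
    rw [map_add, hp, hs, hsum, map_one]
  have hpsM : p ∉ M ∨ s ∉ M := by
    by_contra hc
    push_neg at hc
    exact hM.ne_top (Ideal.eq_top_of_isUnit_mem M (hps ▸ M.add_mem hc.1 hc.2) isUnit_one)
  set φ := algebraMap D (Localization.AtPrime M) with hφ
  rcases hpsM with hpM | hsM
  · left
    have hbp : b * p = a * q := by
      apply hinjK
      rw [map_mul, map_mul, hp, hq]
      ring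
    have hup : IsUnit (φ p) :=
      IsLocalization.map_units (M := M.primeCompl) (Localization.AtPrime M) ⟨p, hpM⟩
    obtain ⟨u, hu⟩ := hup
    refine ⟨φ q * ↑u⁻¹, ?_⟩
    have : φ b * φ p = φ a * φ q := by rw [← map_mul, ← map_mul, hbp]
    calc φ b = φ b * (φ p * ↑u⁻¹) := by rw [← hu, Units.mul_inv, mul_one]
      _ = φ b * φ p * ↑u⁻¹ := by ring
      _ = φ a * (φ q * ↑u⁻¹) := by rw [this]; ring
  · right
    have hbs : a * s = b * r := by
      apply hinjK
      rw [map_mul, map_mul, hs, hr]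
      ring
    have hup : IsUnit (φ s) :=
      IsLocalization.map_units (M := M.primeCompl) (Localization.AtPrime M) ⟨s, hsM⟩
    obtain ⟨u, hu⟩ := hup
    refine ⟨φ r * ↑u⁻¹, ?_⟩
    have : φ a * φ s = φ b * φ r := by rw [← map_mul, ← map_mul, hbs]
    calc φ a = φ a * (φ s * ↑u⁻¹) := by rw [← hu, Units.mul_inv, mul_one]
      _ = φ a * φ s * ↑u⁻¹ := by ring
      _ = φ b * (φ r * ↑u⁻¹) := by rw [this]; ring

/-- a Prüfer domain has pair invertibility. -/
lemma pairProp_of_pruefer (hD : IsPrueferDomain D) : PairPropPruefer D := by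
  intro a b ha hb
  set K := FractionRing D
  set α := algebraMap D K with hα
  set I : Ideal D := Ideal.span {a, b} with hI
  have hIbot : I ≠ ⊥ := by
    intro h
    exact ha (Ideal.span_eq_bot.mp h a (by simp))
  obtain ⟨u, hu⟩ := hD I hIbot (Submodule.fg_span (Set.toFinite _))
  have hmul : (I : FractionalIdeal (nonZeroDivisors D) K) * ↑u⁻¹ = 1 := by
    rw [← hu, Units.mul_inv]
  have h1 : (1 : K) ∈ (I : FractionalIdeal (nonZeroDivisors D) K) * ↑u⁻¹ := by
    rw [hmul]
    exact FractionalIdeal.one_mem_one _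
  rw [← FractionalIdeal.mem_coe, FractionalIdeal.coe_mul] at h1
  set Jm : Submodule D K := ((↑u⁻¹ : FractionalIdeal (nonZeroDivisors D) K) : Submodule D K)
  have key : ∀ z ∈ ((I : FractionalIdeal (nonZeroDivisors D) K) : Submodule D K) * Jm,
      ∃ x y : K, x ∈ Jm ∧ y ∈ Jm ∧ z = α a * x + α b * y := by
    intro z hz
    refine Submodule.mul_induction_on hz ?_ ?_
    · intro i hi j hj
      obtain ⟨c, hc, rfl⟩ := (FractionalIdeal.mem_coeIdeal _).mp hi
      obtain ⟨p, q, hpq⟩ := Ideal.mem_span_pair.mp hc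
      refine ⟨α p * j, α q * j,
        by rw [← Algebra.smul_def]; exact Submodule.smul_mem Jm p hj,
        by rw [← Algebra.smul_def]; exact Submodule.smul_mem Jm q hj, ?_⟩
      rw [← hpq]
      push_cast [map_add, map_mul]
      ring
    · rintro z w ⟨x1, y1, hx1, hy1, rfl⟩ ⟨x2, y2, hx2, hy2, rfl⟩
      exact ⟨x1 + x2, y1 + y2, Submodule.add_mem _ hx1 hx2, Submodule.add_mem _ hy1 hy2, by ring⟩
  obtain ⟨x, y, hx, hy, hz⟩ := key 1 h1
  have hprod : ∀ c ∈ I, ∀ w ∈ Jm, ∃ v, α v = α c * w := by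
    intro c hc w hw
    have : α c * w ∈ ((I : FractionalIdeal (nonZeroDivisors D) K) : Submodule D K) * Jm := by
      apply Submodule.mul_mem_mul _ hw
      exact (FractionalIdeal.mem_coeIdeal _).mpr ⟨c, hc, rfl⟩
    rw [← FractionalIdeal.coe_mul, FractionalIdeal.mem_coe, hmul] at this
    exact FractionalIdeal.mem_one_iff _ |>.mp this
  have haI : a ∈ I := Ideal.subset_span (by simp)
  have hbI : b ∈ I := Ideal.subset_span (by simp)
  exact ⟨x, y, hz.symm, hprod a haI x hx, hprod a haI y hy, hprod b hbI x hx, hprod b hbI y hy⟩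

/-- total divisibility at all maximal ideals gives the Prüfer property. -/
lemma pruefer_of_tot_pruefer
    (htot : ∀ (M : Ideal D) (hM : M.IsMaximal),
      TotAtPruefer (@Ideal.primeCompl D _ M hM.isPrime)) :
    IsPrueferDomain D := by
  classical
  intro I hbot hfg
  obtain ⟨s, hs⟩ := hfg
  set K := FractionRing D
  set α := algebraMap D K with hα
  have hinjK : Function.Injective α := IsFractionRing.injective D K
  set Jm : Submodule D K :=
    { carrier := {x : K | ∀ c ∈ I, α c * x ∈ (1 : Submodule D K)}
      add_mem' := fun {x y} hx hy c hc => by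
        rw [mul_add]; exact Submodule.add_mem _ (hx c hc) (hy c hc)
      zero_mem' := fun c hc => by
        rw [mul_zero]; exact Submodule.zero_mem _
      smul_mem' := fun d x hx c hc => by
        rw [mul_smul_comm]; exact Submodule.smul_mem _ d (hx c hc) } with hJm
  have hmemJm : ∀ x : K, x ∈ Jm ↔ ∀ c ∈ I, α c * x ∈ (1 : Submodule D K) := fun _ => Iff.rfl
  obtain ⟨a0, ha0I, ha0⟩ := Submodule.exists_mem_ne_zero_of_ne_bot hbot
  have hfrac : IsFractional (nonZeroDivisors D) Jm := by
    refine ⟨a0, mem_nonZeroDivisors_of_ne_zero ha0, fun x hx => ?_⟩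
    obtain ⟨y, hy⟩ := (Submodule.mem_one).mp ((hmemJm x).mp hx a0 ha0I)
    exact ⟨y, by rw [hy, Algebra.smul_def]⟩
  set J : FractionalIdeal (nonZeroDivisors D) K := ⟨Jm, hfrac⟩ with hJ
  set E : Ideal D := Submodule.comap (Algebra.linearMap D K)
    (((I : FractionalIdeal (nonZeroDivisors D) K) : Submodule D K) * Jm) with hE
  have hEtop : E = ⊤ := by
    by_contra hne
    obtain ⟨M, hM, hEM⟩ := Ideal.exists_le_maximal E hne
    have : M.IsPrime := hM.isPrime
    have hsne : s.Nonempty := by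
      rcases s.eq_empty_or_nonempty with rfl | h
      · exact absurd (by simpa using hs.symm) hbot
      · exact h
    obtain ⟨w, hws, hwd⟩ :=
      finmin_pruefer (algebraMap D (Localization.AtPrime M)) (htot M hM) s hsne
    have hch : ∀ c ∈ s, ∃ t, t ∉ M ∧ ∃ r, t * c = w * r := by
      intro c hc
      obtain ⟨t, ht, r, hr⟩ := dvd_unpack_pruefer M (hwd c hc)
      exact ⟨t, ht, r, hr⟩
    choose tf htM rf hrf using hch
    set t : D := ∏ c ∈ s.attach, tf c.1 c.2 with ht
    have htnM : t ∉ M := by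
      intro htM'
      have := Finset.prod_induction (s := s.attach)
        (fun c : {x // x ∈ s} => tf c.1 c.2) (fun d => d ∉ M)
        (fun x y hx hy hxy => by
          rcases this.mem_or_mem hxy with h | h
          · exact hx h
          · exact hy h)
        (fun h1 => hM.ne_top (Ideal.eq_top_of_isUnit_mem M h1 isUnit_one))
        (fun c _ => htM c.1 c.2)
      exact this htM'
    have htne : t ≠ 0 := fun h0 => htnM (h0 ▸ M.zero_mem)
    have hw0 : w ≠ 0 := by
      intro hw0
      apply hbot
      rw [← hs, Ideal.span_eq_bot]
      intro c hc
      have := hrf c hc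
      rw [hw0, zero_mul] at this
      have htfne : tf c hc ≠ 0 := fun h0 => htM c hc (h0 ▸ M.zero_mem)
      exact (mul_eq_zero.mp this).resolve_left htfne
    have hαw : α w ≠ 0 := fun h0 => hw0 (hinjK (by rw [h0, map_zero]))
    set x : K := (α w)⁻¹ * α t with hx
    have hxJ : x ∈ Jm := by
      rw [hmemJm]
      intro c hcI
      rw [← hs] at hcI
      induction hcI using Submodule.span_induction with
      | mem c hc =>
        have hsplit : tf c hc * c * ∏ d ∈ (s.attach).erase ⟨c, hc⟩, tf d.1 d.2 = c * t := by
          rw [ht, ← Finset.mul_prod_erase s.attach _ (Finset.mem_attach s ⟨c, hc⟩)]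
          ring
        have hct : α c * α t = α w * α (rf c hc * ∏ d ∈ (s.attach).erase ⟨c, hc⟩, tf d.1 d.2) := by
          rw [← map_mul, ← map_mul]
          congr 1
          rw [← hsplit, hrf c hc]
          ring
        have h2 : α c * x = (α w)⁻¹ * (α c * α t) := by rw [hx]; ring
        rw [hct] at h2
        rw [h2, inv_mul_cancel_left₀ hαw]
        exact Submodule.mem_one.mpr ⟨_, rfl⟩
      | zero => rw [map_zero, zero_mul]; exact Submodule.zero_mem _
      | add c d _ _ hc hd => rw [map_add, add_mul]; exact Submodule.add_mem _ hc hd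
      | smul d c _ hc =>
        have := Submodule.smul_mem (1 : Submodule D K) d hc
        rw [Algebra.smul_def] at this
        rw [smul_eq_mul, map_mul, mul_assoc]
        exact this
    have hwI : w ∈ I := by rw [← hs]; exact Ideal.subset_span hws
    have hmemE : t ∈ E := by
      rw [hE]
      simp only [Submodule.mem_comap]
      have : (Algebra.linearMap D K) t = α w * x := by
        simp only [Algebra.linearMap_apply]
        rw [hx, ← mul_assoc, mul_inv_cancel₀ hαw, one_mul]
      rw [this]
      exact Submodule.mul_mem_mul ((FractionalIdeal.mem_coeIdeal _).mpr ⟨w, hwI, rfl⟩) hxJ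
    exact htnM (hEM hmemE)
  have h1 : (1 : K) ∈ ((I : FractionalIdeal (nonZeroDivisors D) K) : Submodule D K) * Jm := by
    have : (1 : D) ∈ E := hEtop ▸ Submodule.mem_top
    simpa using (Submodule.mem_comap.mp this)
  have hIJ : (I : FractionalIdeal (nonZeroDivisors D) K) * J = 1 := by
    apply FractionalIdeal.coeToSubmodule_injective
    simp only [FractionalIdeal.coe_mul, FractionalIdeal.coe_one]
    apply le_antisymm
    · intro z hz
      refine Submodule.mul_induction_on hz ?_ ?_
      · intro i hi j hj
        obtain ⟨c, hc, rfl⟩ := (FractionalIdeal.mem_coeIdeal _).mp hi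
        exact (hmemJm j).mp hj c hc
      · intro z w hz hw
        exact Submodule.add_mem _ hz hw
    · intro z hz
      obtain ⟨d, hd⟩ := Submodule.mem_one.mp hz
      have : z = d • (1 : K) := by rw [← hd, Algebra.algebraMap_eq_smul_one]
      rw [this]
      exact Submodule.smul_mem _ d h1
  exact IsUnit.of_mul_eq_one J hIJ

/-- total divisibility at maximal ideals gives the quasi-Prüfer conclusion. -/
lemma quasi_of_tot_pruefer
    (htot : ∀ (M : Ideal D) (hM : M.IsMaximal),
      TotAtPruefer (@Ideal.primeCompl D _ M hM.isPrime))
    (Q : Ideal (Polynomial D)) (hQ : Q.IsPrime) (hc : contentIdealOfIdeal Q ≠ ⊤) :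
    Q = Ideal.map (Polynomial.C : D →+* Polynomial D)
      (Q.comap (Polynomial.C : D →+* Polynomial D)) := by
  classical
  obtain ⟨M, hM, hcM⟩ := Ideal.exists_le_maximal _ hc
  haveI : M.IsPrime := hM.isPrime
  have tot : ∀ x y : D,
      algebraMap D (Localization.AtPrime M) x ∣ algebraMap D (Localization.AtPrime M) y ∨
      algebraMap D (Localization.AtPrime M) y ∣ algebraMap D (Localization.AtPrime M) x :=
    htot M hM
  apply le_antisymm ?_ (Ideal.map_le_iff_le_comap.mpr le_rfl)
  intro f hf
  rw [Ideal.mem_map_C_iff]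
  intro n
  rw [Ideal.mem_comap]
  rcases eq_or_ne f 0 with rfl | hf0
  · simp
  have hsupp : f.support.Nonempty := Polynomial.support_nonempty.mpr hf0
  set sc : Finset D := f.support.image f.coeff with hsc
  have hscne : sc.Nonempty := hsupp.image _
  obtain ⟨w, hwsc, hwd⟩ := finmin_pruefer (algebraMap D (Localization.AtPrime M)) tot sc hscne
  obtain ⟨k, hk, hwk⟩ := Finset.mem_image.mp hwsc
  have hw0 : w ≠ 0 := by
    rw [← hwk]; exact Polynomial.mem_support_iff.mp hk
  have hch : ∀ i ∈ f.support, ∃ t, t ∉ M ∧ ∃ r, t * f.coeff i = w * r := by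
    intro i hi
    obtain ⟨t, ht, r, hr⟩ :=
      dvd_unpack_pruefer M (hwd (f.coeff i) (Finset.mem_image_of_mem _ hi))
    exact ⟨t, ht, r, hr⟩
  choose tf htM rf hrf using hch
  set t : D := ∏ i ∈ f.support.attach, tf i.1 i.2 with ht
  have htnM : t ∉ M := by
    intro htM'
    have := Finset.prod_induction (s := f.support.attach)
      (fun i : {x // x ∈ f.support} => tf i.1 i.2) (fun d => d ∉ M)
      (fun x y hx hy hxy => by
        rcases ‹M.IsPrime›.mem_or_mem hxy with h | h
        · exact hx h
        · exact hy h)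
      (fun h1 => hM.ne_top (Ideal.eq_top_of_isUnit_mem M h1 isUnit_one))
      (fun i _ => htM i.1 i.2)
    exact this htM'
  set g : Polynomial D := ∑ i ∈ f.support.attach,
    Polynomial.monomial i.1 (rf i.1 i.2 * ∏ j ∈ f.support.attach.erase i, tf j.1 j.2) with hg
  have hgcoeff : ∀ i (hi : i ∈ f.support),
      g.coeff i = rf i hi * ∏ j ∈ f.support.attach.erase ⟨i, hi⟩, tf j.1 j.2 := by
    intro i hi
    rw [hg, Polynomial.finset_sum_coeff]
    rw [Finset.sum_eq_single ⟨i, hi⟩]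
    · simp
    · intro b _ hbne
      rw [Polynomial.coeff_monomial]
      rw [if_neg]
      intro hbi
      exact hbne (Subtype.ext hbi)
    · intro habs
      exact absurd (Finset.mem_attach _ _) habs
  have hgcoeff0 : ∀ i, i ∉ f.support → g.coeff i = 0 := by
    intro i hi
    rw [hg, Polynomial.finset_sum_coeff]
    apply Finset.sum_eq_zero
    intro b _
    rw [Polynomial.coeff_monomial, if_neg]
    intro hbi
    exact hi (hbi ▸ b.2)
  have hkey : ∀ i, t * f.coeff i = w * g.coeff i := by
    intro i
    by_cases hi : i ∈ f.support
    · rw [hgcoeff i hi, ht,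
        ← Finset.mul_prod_erase f.support.attach _ (Finset.mem_attach _ ⟨i, hi⟩)]
      calc tf i hi * (∏ j ∈ f.support.attach.erase ⟨i, hi⟩, tf j.1 j.2) * f.coeff i
          = (tf i hi * f.coeff i) * ∏ j ∈ f.support.attach.erase ⟨i, hi⟩, tf j.1 j.2 := by ring
        _ = (w * rf i hi) * ∏ j ∈ f.support.attach.erase ⟨i, hi⟩, tf j.1 j.2 := by
            rw [hrf i hi]
        _ = _ := by ring
    · rw [hgcoeff0 i hi, Polynomial.notMem_support_iff.mp hi]
      ring
  have hCtf : Polynomial.C t * f = Polynomial.C w * g := by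
    ext i
    rw [Polynomial.coeff_C_mul, Polynomial.coeff_C_mul]
    exact hkey i
  have hmem : Polynomial.C w * g ∈ Q := hCtf ▸ Q.mul_mem_left _ hf
  rcases hQ.mem_or_mem hmem with hwQ | hgQ
  · have hwp : w ∈ Q.comap (Polynomial.C : D →+* Polynomial D) := hwQ
    haveI hpprime : (Q.comap (Polynomial.C : D →+* Polynomial D)).IsPrime :=
      Ideal.IsPrime.comap _
    have htp : t ∉ Q.comap (Polynomial.C : D →+* Polynomial D) := by
      intro htp
      apply htnM
      apply hcM
      have : (Polynomial.C t : Polynomial D).coeff 0 ∈ contentIdealOfIdeal Q :=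
        coeff_mem_content_pruefer htp 0
      simpa using this
    have : t * f.coeff n ∈ Q.comap (Polynomial.C : D →+* Polynomial D) := by
      rw [hkey n]
      exact Ideal.mul_mem_right _ _ hwp
    rcases hpprime.mem_or_mem this with h | h
    · exact absurd h htp
    · exact h
  · exfalso
    have hgk : w * g.coeff k = t * w := by rw [← hkey k, hwk]
    have : g.coeff k = t := mul_left_cancel₀ hw0 (hgk.trans (mul_comm t w))
    apply htnM
    apply hcM
    rw [← this]
    exact coeff_mem_content_pruefer hgQ k

end AuxPruefer

section AuxCore

variable {D : Type*} [CommRing D] [IsDomain D] [IsIntegrallyClosed D]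

/-- the key content lemma over an integrally closed domain, for linear polynomials:
if `(aX + b) h` has coefficients in `D` then so do `a hᵢ` and `b hᵢ`. -/
lemma core_lemma_pruefer {a b : D} (ha : a ≠ 0)
    {g : Polynomial D} {h : Polynomial (FractionRing D)}
    (hg : g.map (algebraMap D (FractionRing D)) =
      (Polynomial.C (algebraMap D (FractionRing D) a) * Polynomial.X +
       Polynomial.C (algebraMap D (FractionRing D) b)) * h) (i : ℕ) :
    (∃ u, algebraMap D (FractionRing D) u = algebraMap D (FractionRing D) a * h.coeff i) ∧
    (∃ v, algebraMap D (FractionRing D) v = algebraMap D (FractionRing D) b * h.coeff i) := by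
  classical
  set K := FractionRing D
  set α := algebraMap D K with hα
  have hinjK : Function.Injective α := IsFractionRing.injective D K
  set A := α a with hA
  set B := α b with hB
  have hA0 : A ≠ 0 := fun h0 => ha (hinjK (by rw [map_zero, ← hA]; exact h0))
  set n := h.natDegree with hn
  have hrec : ∀ j, α (g.coeff (j+1)) = A * h.coeff j + B * h.coeff (j+1) := by
    intro j
    rw [← Polynomial.coeff_map, hg, add_mul, Polynomial.coeff_add, mul_assoc,
      Polynomial.coeff_C_mul, Polynomial.coeff_X_mul, Polynomial.coeff_C_mul]
  have hrec0 : α (g.coeff 0) = B * h.coeff 0 := by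
    rw [← Polynomial.coeff_map, hg, add_mul, Polynomial.coeff_add, mul_assoc,
      Polynomial.coeff_C_mul, Polynomial.mul_coeff_zero, Polynomial.coeff_X_zero, zero_mul,
      mul_zero, zero_add, Polynomial.coeff_C_mul]
  set N : Submodule D K := Submodule.span D ((fun s : ℕ => A ^ s * B ^ (n - s)) '' (Set.Iic n))
    with hN
  have hgen : ∀ s : ℕ, s ≤ n → A ^ s * B ^ (n - s) ∈ N :=
    fun s hs => Submodule.subset_span ⟨s, hs, rfl⟩
  have hNfg : N.FG := Submodule.fg_span ((Set.finite_Iic n).image _)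
  have hNbot : N ≠ ⊥ := by
    intro h0
    have : A ^ n * B ^ (n - n) ∈ N := hgen n le_rfl
    rw [h0, Submodule.mem_bot] at this
    rw [Nat.sub_self, pow_zero, mul_one] at this
    exact pow_ne_zero n hA0 this
  have hDsmul : ∀ (d : D) (x : K), x ∈ N → α d * x ∈ N := by
    intro d x hx
    have := N.smul_mem d hx
    rwa [Algebra.smul_def] at this
  have hM2 : ∀ i s t : ℕ, s + t = n + 1 → i + 1 ≤ t → A ^ s * B ^ t * h.coeff i ∈ N := by
    intro i
    induction i with
    | zero =>
      intro s t hst ht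
      obtain ⟨t', rfl⟩ : ∃ t', t = t' + 1 := ⟨t - 1, by omega⟩
      have ht' : t' = n - s := by omega
      have : A ^ s * B ^ (t' + 1) * h.coeff 0 = α (g.coeff 0) * (A ^ s * B ^ t') := by
        rw [hrec0]; ring
      rw [this, ht']
      exact hDsmul _ _ (hgen s (by omega))
    | succ i ih =>
      intro s t hst ht
      obtain ⟨t', rfl⟩ : ∃ t', t = t' + 1 := ⟨t - 1, by omega⟩
      have hBh : B * h.coeff (i+1) = α (g.coeff (i+1)) - A * h.coeff i := by
        rw [hrec i]; ring
      have hsplit : A ^ s * B ^ (t' + 1) * h.coeff (i+1)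
          = α (g.coeff (i+1)) * (A ^ s * B ^ t') - A ^ (s+1) * B ^ t' * h.coeff i := by
        calc A ^ s * B ^ (t' + 1) * h.coeff (i+1)
            = A ^ s * B ^ t' * (B * h.coeff (i+1)) := by ring
          _ = A ^ s * B ^ t' * (α (g.coeff (i+1)) - A * h.coeff i) := by rw [hBh]
          _ = _ := by ring
      rw [hsplit]
      apply Submodule.sub_mem
      · have ht'' : t' = n - s := by omega
        rw [ht'']
        exact hDsmul _ _ (hgen s (by omega))
      · exact ih (s+1) t' (by omega) (by omega)
  have hM1 : ∀ s t i : ℕ, s + t = n + 1 → n + 1 ≤ i + s → A ^ s * B ^ t * h.coeff i ∈ N := by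
    intro s
    induction s with
    | zero =>
      intro t i hst hi
      have : h.coeff i = 0 := Polynomial.coeff_eq_zero_of_natDegree_lt (by omega)
      rw [this, mul_zero]
      exact N.zero_mem
    | succ s ih =>
      intro t i hst hi
      have hAh : A * h.coeff i = α (g.coeff (i+1)) - B * h.coeff (i+1) := by
        rw [hrec i]; ring
      have hsplit : A ^ (s+1) * B ^ t * h.coeff i
          = α (g.coeff (i+1)) * (A ^ s * B ^ t) - A ^ s * B ^ (t+1) * h.coeff (i+1) := by
        calc A ^ (s+1) * B ^ t * h.coeff i
            = A ^ s * B ^ t * (A * h.coeff i) := by ring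
          _ = A ^ s * B ^ t * (α (g.coeff (i+1)) - B * h.coeff (i+1)) := by rw [hAh]
          _ = _ := by ring
      rw [hsplit]
      apply Submodule.sub_mem
      · have ht'' : t = n - s := by omega
        rw [ht'']
        exact hDsmul _ _ (hgen s (by omega))
      · exact ih (t+1) (i+1) (by omega) (by omega)
  have hcomb : ∀ s t i : ℕ, s + t = n + 1 → A ^ s * B ^ t * h.coeff i ∈ N := by
    intro s t i hst
    by_cases hc : n + 1 ≤ i + s
    · exact hM1 s t i hst hc
    · exact hM2 i s t hst (by omega)
  have hint : ∀ z : K, (∀ x ∈ N, z * x ∈ N) → ∃ u, α u = z := by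
    intro z hz
    have : IsIntegral D z := by
      apply isIntegral_of_smul_mem_submodule N hNbot hNfg z
      intro x hx
      rw [smul_eq_mul]
      exact hz x hx
    exact IsIntegrallyClosed.isIntegral_iff.mp this
  have hstab : ∀ z : K, (∀ s : ℕ, s ≤ n → z * (A ^ s * B ^ (n - s)) ∈ N) →
      ∀ x ∈ N, z * x ∈ N := by
    intro z hz x hx
    induction hx using Submodule.span_induction with
    | mem x hxmem =>
      obtain ⟨s, hs, rfl⟩ := hxmem
      exact hz s hs
    | zero => rw [mul_zero]; exact N.zero_mem
    | add x y _ _ hx hy => rw [mul_add]; exact N.add_mem hx hy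
    | smul d x _ hx =>
      rw [mul_smul_comm]
      exact N.smul_mem d hx
  constructor
  · apply hint
    apply hstab
    intro s hs
    have : A * h.coeff i * (A ^ s * B ^ (n - s)) = A ^ (s+1) * B ^ (n - s) * h.coeff i := by ring
    rw [this]
    exact hcomb (s+1) (n-s) i (by omega)
  · apply hint
    apply hstab
    intro s hs
    have : B * h.coeff i * (A ^ s * B ^ (n - s)) = A ^ s * B ^ (n - s + 1) * h.coeff i := by ring
    rw [this]
    exact hcomb s (n-s+1) i (by omega)

/-- the quasi-Prüfer hypothesis gives pair invertibility, over an integrally closed domain. -/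
lemma pairProp_of_quasi_pruefer
    (hH : ∀ Q : Ideal (Polynomial D), Q.IsPrime → contentIdealOfIdeal Q ≠ ⊤ →
        Q = Ideal.map (Polynomial.C : D →+* Polynomial D)
          (Q.comap (Polynomial.C : D →+* Polynomial D))) :
    PairPropPruefer D := by
  classical
  intro a b ha hb
  set K := FractionRing D
  set α := algebraMap D K with hα
  have hinjK : Function.Injective α := IsFractionRing.injective D K
  set A := α a with hA
  set B := α b with hB
  have hA0 : A ≠ 0 := fun h0 => ha (hinjK (by rw [map_zero, ← hA]; exact h0))
  set f' : Polynomial K := Polynomial.C A * Polynomial.X + Polynomial.C B with hf'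
  have hf'deg : f'.degree = 1 := Polynomial.degree_linear hA0
  have hf'irr : Irreducible f' := Polynomial.irreducible_of_degree_eq_one hf'deg
  have hf'prime : Prime f' := UniqueFactorizationMonoid.irreducible_iff_prime.mp hf'irr
  set ψ : Polynomial D →+* Polynomial K := Polynomial.mapRingHom α with hψ
  set Q : Ideal (Polynomial D) := Ideal.comap ψ (Ideal.span {f'}) with hQ
  have hspan_prime : (Ideal.span {f'}).IsPrime :=
    (Ideal.span_singleton_prime hf'prime.ne_zero).mpr hf'prime
  haveI hQprime : Q.IsPrime := hspan_prime.comap ψ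
  have hQmem : ∀ p : Polynomial D, p ∈ Q ↔ f' ∣ p.map α := by
    intro p
    rw [hQ, Ideal.mem_comap, Ideal.mem_span_singleton]
    rfl
  have hcomap : Q.comap (Polynomial.C : D →+* Polynomial D) = ⊥ := by
    ext c
    simp only [Ideal.mem_comap, Ideal.mem_bot]
    constructor
    · intro hc
      have hdvd := (hQmem (Polynomial.C c)).mp hc
      rw [Polynomial.map_C] at hdvd
      by_contra hc0
      have hαc : α c ≠ 0 := fun h0 => hc0 (hinjK (by rw [h0, map_zero]))
      have hCne : (Polynomial.C (α c) : Polynomial K) ≠ 0 := by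
        simpa using hαc
      have := Polynomial.degree_le_of_dvd hdvd hCne
      rw [hf'deg, Polynomial.degree_C hαc] at this
      exact absurd this (by decide)
    · rintro rfl
      rw [map_zero]
      exact Q.zero_mem
  set q0 : Polynomial D := Polynomial.C a * Polynomial.X + Polynomial.C b with hq0
  have hq0Q : q0 ∈ Q := by
    rw [hQmem]
    have : q0.map α = f' := by
      rw [hq0, hf']
      simp [Polynomial.map_add, Polynomial.map_mul, Polynomial.map_C, Polynomial.map_X]
      rfl
    rw [this]
  have hq0ne : q0 ≠ 0 := fun h0 => by
    have : q0.coeff 1 = a := by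
      rw [hq0]
      simp
    rw [h0] at this
    simp at this
    exact ha this.symm
  have hQnebot : Q ≠ Ideal.map (Polynomial.C : D →+* Polynomial D)
      (Q.comap (Polynomial.C : D →+* Polynomial D)) := by
    rw [hcomap, Ideal.map_bot]
    intro h0
    rw [h0] at hq0Q
    exact hq0ne (Ideal.mem_bot.mp hq0Q)
  have hcontent : contentIdealOfIdeal Q = ⊤ := by
    by_contra hne
    exact hQnebot (hH Q hQprime hne)
  set E : Ideal D :=
    { carrier := {d : D | ∃ x y : K, A * x + B * y = α d ∧
        (∃ u, α u = A * x) ∧ (∃ u, α u = A * y) ∧ (∃ u, α u = B * x) ∧ (∃ u, α u = B * y)}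
      add_mem' := by
        rintro d e ⟨x1, y1, h1, ⟨u1, hu1⟩, ⟨u2, hu2⟩, ⟨u3, hu3⟩, ⟨u4, hu4⟩⟩
          ⟨x2, y2, h2, ⟨v1, hv1⟩, ⟨v2, hv2⟩, ⟨v3, hv3⟩, ⟨v4, hv4⟩⟩
        refine ⟨x1 + x2, y1 + y2, ?_, ⟨u1 + v1, ?_⟩, ⟨u2 + v2, ?_⟩, ⟨u3 + v3, ?_⟩,
          ⟨u4 + v4, ?_⟩⟩
        · rw [map_add, ← h1, ← h2]; ring
        · rw [map_add, hu1, hv1]; ring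
        · rw [map_add, hu2, hv2]; ring
        · rw [map_add, hu3, hv3]; ring
        · rw [map_add, hu4, hv4]; ring
      zero_mem' := ⟨0, 0, by simp, ⟨0, by simp⟩, ⟨0, by simp⟩, ⟨0, by simp⟩, ⟨0, by simp⟩⟩
      smul_mem' := by
        rintro r d ⟨x, y, hxy, ⟨u1, hu1⟩, ⟨u2, hu2⟩, ⟨u3, hu3⟩, ⟨u4, hu4⟩⟩
        refine ⟨α r * x, α r * y, ?_, ⟨r * u1, ?_⟩, ⟨r * u2, ?_⟩, ⟨r * u3, ?_⟩, ⟨r * u4, ?_⟩⟩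
        · rw [smul_eq_mul, map_mul, ← hxy]; ring
        · rw [map_mul, hu1]; ring
        · rw [map_mul, hu2]; ring
        · rw [map_mul, hu3]; ring
        · rw [map_mul, hu4]; ring } with hE
  have hmemE : ∀ d : D, d ∈ E ↔ ∃ x y : K, A * x + B * y = α d ∧
      (∃ u, α u = A * x) ∧ (∃ u, α u = A * y) ∧ (∃ u, α u = B * x) ∧ (∃ u, α u = B * y) :=
    fun _ => Iff.rfl
  have hcontE : contentIdealOfIdeal Q ≤ E := by
    rw [contentIdealOfIdeal, Ideal.span_le]
    rintro d ⟨q, hqQ, l, rfl⟩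
    obtain ⟨h, hh⟩ := (hQmem q).mp hqQ
    have hcore := core_lemma_pruefer (b := b) ha (g := q) (h := h) hh
    have hcoeff : ∀ j, α (q.coeff (j+1)) = A * h.coeff j + B * h.coeff (j+1) := by
      intro j
      rw [← Polynomial.coeff_map, hh, add_mul, Polynomial.coeff_add, mul_assoc,
        Polynomial.coeff_C_mul, Polynomial.coeff_X_mul, Polynomial.coeff_C_mul]
    have hcoeff0 : α (q.coeff 0) = B * h.coeff 0 := by
      rw [← Polynomial.coeff_map, hh, add_mul, Polynomial.coeff_add, mul_assoc,
        Polynomial.coeff_C_mul, Polynomial.mul_coeff_zero, Polynomial.coeff_X_zero, zero_mul,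
        mul_zero, zero_add, Polynomial.coeff_C_mul]
    rw [SetLike.mem_coe, hmemE]
    cases l with
    | zero =>
      refine ⟨0, h.coeff 0, by rw [hcoeff0]; ring, ⟨0, by simp⟩, (hcore 0).1, ⟨0, by simp⟩,
        (hcore 0).2⟩
    | succ j =>
      refine ⟨h.coeff j, h.coeff (j+1), by rw [hcoeff j], (hcore j).1, (hcore (j+1)).1,
        (hcore j).2, (hcore (j+1)).2⟩
  have h1E : (1 : D) ∈ E := hcontE (hcontent ▸ Submodule.mem_top)
  obtain ⟨x, y, hxy, c1, c2, c3, c4⟩ := (hmemE 1).mp h1E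
  exact ⟨x, y, by rw [hxy, map_one], c1, c2, c3, c4⟩

end AuxCore

/-- an integrally closed domain `D` is Prüfer iff every prime `Q` of `D[X]`
with proper content satisfies `Q = (Q ∩ D)[X]`. -/
theorem pruefer_iff_quasiPruefer_of_integrallyClosed
    (D : Type*) [CommRing D] [IsDomain D] [IsIntegrallyClosed D] :
    IsPrueferDomain D ↔
      ∀ Q : Ideal (Polynomial D), Q.IsPrime → contentIdealOfIdeal Q ≠ ⊤ →
        Q = Ideal.map (Polynomial.C : D →+* Polynomial D)
          (Q.comap (Polynomial.C : D →+* Polynomial D)) := by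
  constructor
  · intro hP Q hQ hc
    exact quasi_of_tot_pruefer
      (fun M hM => pairProp_tot_pruefer (pairProp_of_pruefer hP) M hM) Q hQ hc
  · intro hH
    exact pruefer_of_tot_pruefer
      (fun M hM => pairProp_tot_pruefer (pairProp_of_quasi_pruefer hH) M hM)
end

section
/- Let D be a quasi-Prüfer domain. Then every maximal ideal M of D is a t-ideal, i.e., M^t = M, where M^t is the union of F^v over all nonzero finitely generated subideals F ⊆ M. -/
open Polynomial

section Aux

variable {D : Type*} [CommRing D]

/-- The content ideal of a polynomial: span of its coefficients. -/
noncomputable def cI (p : D[X]) : Ideal D := Ideal.span (Set.range p.coeff)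

lemma coeff_mem_cI (p : D[X]) (n : ℕ) : p.coeff n ∈ cI p :=
  Ideal.subset_span ⟨n, rfl⟩

lemma cI_le_iff {p : D[X]} {I : Ideal D} : cI p ≤ I ↔ ∀ n, p.coeff n ∈ I := by
  constructor
  · intro h n; exact h (coeff_mem_cI p n)
  · intro h
    refine Ideal.span_le.mpr ?_
    rintro _ ⟨n, rfl⟩
    exact h n

lemma map_mk_eq_zero_iff {N : Ideal D} {p : D[X]} :
    p.map (Ideal.Quotient.mk N) = 0 ↔ ∀ n, p.coeff n ∈ N := by
  constructor
  · intro h n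
    have := congrArg (fun r => r.coeff n) h
    simp only [coeff_map, coeff_zero] at this
    exact (Ideal.Quotient.eq_zero_iff_mem).mp this
  · intro h
    ext n
    simp only [coeff_map, coeff_zero]
    exact (Ideal.Quotient.eq_zero_iff_mem).mpr (h n)

lemma cI_mul_top {a b : D[X]} (ha : cI a = ⊤) (hb : cI b = ⊤) : cI (a * b) = ⊤ := by
  by_contra hne
  obtain ⟨N, hNmax, hle⟩ := Ideal.exists_le_maximal _ hne
  haveI : N.IsPrime := hNmax.isPrime
  have hmap : (a * b).map (Ideal.Quotient.mk N) = 0 :=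
    map_mk_eq_zero_iff.mpr fun n => hle (coeff_mem_cI _ n)
  rw [Polynomial.map_mul] at hmap
  rcases mul_eq_zero.mp hmap with h | h
  · have : cI a ≤ N := cI_le_iff.mpr (map_mk_eq_zero_iff.mp h)
    rw [ha] at this
    exact hNmax.ne_top (top_le_iff.mp this)
  · have : cI b ≤ N := cI_le_iff.mpr (map_mk_eq_zero_iff.mp h)
    rw [hb] at this
    exact hNmax.ne_top (top_le_iff.mp this)

/-- Shift-and-add: combine a list of elements of an ideal of polynomials into a single
polynomial (in the ideal) whose coefficients include all their coefficients. -/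
lemma exists_shift_combine (Q : Ideal D[X]) :
    ∀ l : List D[X], (∀ f ∈ l, f ∈ Q) →
      ∃ g ∈ Q, ∀ f ∈ l, ∀ n : ℕ, ∃ k : ℕ, g.coeff k = f.coeff n := by
  intro l
  induction l with
  | nil => exact fun _ => ⟨0, Q.zero_mem, by simp⟩
  | cons f l ih =>
    intro hmem
    obtain ⟨g', hg'Q, hg'⟩ := ih fun f' hf' => hmem f' (List.mem_cons_of_mem _ hf')
    refine ⟨f + g' * X ^ (f.natDegree + 1),
      Ideal.add_mem _ (hmem f List.mem_cons_self) (Ideal.mul_mem_right _ _ hg'Q), ?_⟩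
    intro f' hf' n
    rcases List.mem_cons.mp hf' with rfl | hf'
    · by_cases hn : n ≤ f'.natDegree
      · refine ⟨n, ?_⟩
        rw [Polynomial.coeff_add, Polynomial.coeff_mul_X_pow', if_neg (by omega), add_zero]
      · refine ⟨(f' + g' * X ^ (f'.natDegree + 1)).natDegree + 1, ?_⟩
        rw [Polynomial.coeff_eq_zero_of_natDegree_lt (lt_add_one _),
          Polynomial.coeff_eq_zero_of_natDegree_lt (by omega)]
    · obtain ⟨k, hk⟩ := hg' f' hf' n
      refine ⟨k + (f.natDegree + 1), ?_⟩
      rw [Polynomial.coeff_add, Polynomial.coeff_mul_X_pow,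
        Polynomial.coeff_eq_zero_of_natDegree_lt (by omega), zero_add, hk]

/-- A polynomial with prescribed list of coefficients. -/
noncomputable def ofList (l : List D) : D[X] :=
  ∑ i ∈ Finset.range l.length, C (l.getD i 0) * X ^ i

lemma ofList_coeff (l : List D) (n : ℕ) : (ofList l).coeff n = l.getD n 0 := by
  rw [ofList, Polynomial.finset_sum_coeff]
  simp only [Polynomial.coeff_C_mul, Polynomial.coeff_X_pow, mul_ite, mul_one, mul_zero]
  rw [Finset.sum_ite_eq (Finset.range l.length) n fun i => l.getD i 0]
  by_cases hn : n < l.length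
  · rw [if_pos (Finset.mem_range.mpr hn)]
  · rw [if_neg (fun hmem => hn (Finset.mem_range.mp hmem)),
      List.getD_eq_default _ _ (le_of_not_gt hn)]

/-- Expression of a coefficient of a product as a sum over a fixed window
covering the degree of the second factor. -/
lemma coeff_mul_eq_sum_range {S : Type*} [CommRing S] (p q : S[X]) {e : ℕ}
    (he : q.natDegree ≤ e) (n : ℕ) :
    (p * q).coeff n =
      ∑ j ∈ Finset.range (e + 1), (if j ≤ n then p.coeff (n - j) else 0) * q.coeff j := by
  have h1 : (p * q).coeff n =
      ∑ j ∈ Finset.range (n + 1), (if j ≤ n then p.coeff (n - j) else 0) * q.coeff j := by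
    rw [Polynomial.coeff_mul, Finset.Nat.sum_antidiagonal_eq_sum_range_succ_mk,
      ← Finset.sum_range_reflect]
    refine Finset.sum_congr rfl ?_
    intro j hj
    have hj' : j ≤ n := Nat.lt_succ_iff.mp (Finset.mem_range.mp hj)
    rw [if_pos hj']
    congr 2 <;> omega
  rcases le_total n e with h | h
  · rw [h1]
    refine Finset.sum_subset (by intro x hx; simp only [Finset.mem_range] at *; omega) ?_
    intro j hj hjn
    simp only [Finset.mem_range] at hj hjn
    rw [if_neg (by omega), zero_mul]
  · rw [h1]
    symm
    refine Finset.sum_subset (by intro x hx; simp only [Finset.mem_range] at *; omega) ?_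
    intro j hj hje
    simp only [Finset.mem_range] at hj hje
    rw [show q.coeff j = 0 from Polynomial.coeff_eq_zero_of_natDegree_lt (by omega), mul_zero]

end Aux

/-- The divisorial (`v`-) closure `Iᵛ = (D : (D : I))` of an ideal, as a fractional ideal. -/
noncomputable def vcl (D : Type*) (K : Type*) [CommRing D] [IsDomain D] [Field K]
    [Algebra D K] [IsFractionRing D K] (I : Ideal D) :
    FractionalIdeal (nonZeroDivisors D) K :=
  1 / (1 / (I : FractionalIdeal (nonZeroDivisors D) K))

/-- in a quasi-Prüfer domain every maximal ideal `M` is a `t`-ideal, i.e.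
`Fᵛ ⊆ M` for every nonzero finitely generated `F ⊆ M`. -/
theorem maximal_is_t_ideal_of_quasiPruefer
    (D K : Type*) [CommRing D] [IsDomain D] [Field K] [Algebra D K] [IsFractionRing D K]
    (hqp : ∀ Q : Ideal (Polynomial D), Q.IsPrime → contentIdealOfIdeal Q ≠ ⊤ →
      Q = Ideal.map (Polynomial.C : D →+* Polynomial D)
        (Q.comap (Polynomial.C : D →+* Polynomial D)))
    (M : Ideal D) (hM : M.IsMaximal) :
    ∀ F : Ideal D, F ≠ ⊥ → F.FG → F ≤ M →
      vcl D K F ≤ (M : FractionalIdeal (nonZeroDivisors D) K) := by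
  classical
  intro F hF0 hFfg hFM
  rw [SetLike.le_def]
  intro x hx
  by_contra hxM
  -- basic facts about 1/F
  have hFne : (F : FractionalIdeal (nonZeroDivisors D) K) ≠ 0 :=
    FractionalIdeal.coeIdeal_ne_zero.mpr hF0
  have honeF : (1 : K) ∈ (1 / (F : FractionalIdeal (nonZeroDivisors D) K)) := by
    rw [FractionalIdeal.mem_div_iff_of_ne_zero hFne]
    intro y hy
    rw [one_mul]
    exact FractionalIdeal.coeIdeal_le_one hy
  have h1Fne : (1 / (F : FractionalIdeal (nonZeroDivisors D) K)) ≠ 0 := by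
    intro h
    rw [h] at honeF
    simpa using honeF
  have hx' : x ∈ (1 : FractionalIdeal (nonZeroDivisors D) K) /
      (1 / (F : FractionalIdeal (nonZeroDivisors D) K)) := hx
  -- x = algebraMap a with a ∉ M
  have hx1 : x ∈ (1 : FractionalIdeal (nonZeroDivisors D) K) := by
    have := (FractionalIdeal.mem_div_iff_of_ne_zero h1Fne).mp hx' 1 honeF
    rwa [mul_one] at this
  obtain ⟨a, ha⟩ := (FractionalIdeal.mem_one_iff _).mp hx1
  have haM : a ∉ M := fun h => hxM ((FractionalIdeal.mem_coeIdeal _).mpr ⟨a, h, ha⟩)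
  obtain ⟨y, m, hmM, hym⟩ := hM.exists_inv haM
  -- the finitely generated ideal G
  set G : Ideal D := F ⊔ Ideal.span {m} with hGdef
  have hGfg : G.FG := Submodule.FG.sup hFfg (Submodule.fg_span_singleton m)
  have hGM : G ≤ M := sup_le hFM (Ideal.span_le.mpr (by simpa using hmM))
  have hmG : m ∈ G := Ideal.mem_sup_right (Ideal.subset_span rfl)
  have hG0 : G ≠ ⊥ := fun h => hF0 (le_bot_iff.mp (h ▸ (le_sup_left : F ≤ G)))
  -- key : (D : G) = D
  have key1 : ∀ z : K, (∀ g ∈ G, ∃ d, algebraMap D K d = z * algebraMap D K g) →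
      ∃ d, algebraMap D K d = z := by
    intro z hz
    have hzF : z ∈ (1 / (F : FractionalIdeal (nonZeroDivisors D) K)) := by
      rw [FractionalIdeal.mem_div_iff_of_ne_zero hFne]
      intro w hw
      obtain ⟨f, hfF, rfl⟩ := (FractionalIdeal.mem_coeIdeal _).mp hw
      obtain ⟨d, hd⟩ := hz f (Ideal.mem_sup_left hfF)
      rw [FractionalIdeal.mem_one_iff _]
      exact ⟨d, by rw [hd]⟩
    have hxz : x * z ∈ (1 : FractionalIdeal (nonZeroDivisors D) K) :=
      (FractionalIdeal.mem_div_iff_of_ne_zero h1Fne).mp hx' z hzF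
    obtain ⟨c, hc⟩ := (FractionalIdeal.mem_one_iff _).mp hxz
    obtain ⟨d2, hd2⟩ := hz m hmG
    refine ⟨y * c + d2, ?_⟩
    have h1 : algebraMap D K (y * a + m) = 1 := by rw [hym]; exact _root_.map_one _
    calc algebraMap D K (y * c + d2)
        = algebraMap D K y * (x * z) + z * algebraMap D K m := by
          rw [map_add, map_mul, hc, hd2]
      _ = z * algebraMap D K (y * a + m) := by rw [map_add, map_mul, ← ha]; ring
      _ = z := by rw [h1, mul_one]
  -- powers version
  have key2 : ∀ N : ℕ, ∀ z : K,
      (∀ w ∈ G ^ N, ∃ d, algebraMap D K d = z * algebraMap D K w) →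
      ∃ d, algebraMap D K d = z := by
    intro N
    induction N with
    | zero =>
      intro z hz
      obtain ⟨d, hd⟩ := hz 1 (by rw [pow_zero, Ideal.one_eq_top]; trivial)
      exact ⟨d, by rw [hd, map_one, mul_one]⟩
    | succ N ih =>
      intro z hz
      apply key1 z
      intro g hg
      apply ih (z * algebraMap D K g)
      intro w hw
      have hgw : w * g ∈ G ^ (N + 1) := (pow_succ G N) ▸ Ideal.mul_mem_mul hw hg
      obtain ⟨d, hd⟩ := hz (w * g) hgw
      exact ⟨d, by rw [hd, map_mul]; ring⟩
  -- build the polynomial hpol with coefficient span G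
  obtain ⟨s, hs⟩ := id hGfg
  set hpol : D[X] := ofList s.toList with hhpol
  have hcoeff_mem : ∀ n, hpol.coeff n ∈ G := by
    intro n
    rw [hhpol, ofList_coeff]
    by_cases hn : n < s.toList.length
    · rw [List.getD_eq_getElem _ _ hn]
      have : s.toList.get ⟨n, hn⟩ ∈ s.toList := List.get_mem _ ⟨n, hn⟩
      have : s.toList.get ⟨n, hn⟩ ∈ s := Finset.mem_toList.mp this
      exact hs ▸ Ideal.subset_span this
    · rw [List.getD_eq_default _ _ (le_of_not_gt hn)]
      exact G.zero_mem
  have hspan : cI hpol = G := by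
    refine le_antisymm (cI_le_iff.mpr hcoeff_mem) ?_
    rw [← hs]
    refine Ideal.span_le.mpr ?_
    intro b hb
    obtain ⟨⟨n, hn⟩, hget⟩ := List.mem_iff_get.mp (Finset.mem_toList.mpr hb)
    refine Ideal.subset_span ⟨n, ?_⟩
    rw [hhpol, ofList_coeff, List.getD_eq_getElem _ _ hn]; exact hget
  have hpol0 : hpol ≠ 0 := by
    intro h0
    apply hG0
    rw [← hspan, h0]
    refine le_bot_iff.mp (Ideal.span_le.mpr ?_)
    rintro _ ⟨n, rfl⟩
    simp
  -- the image H in K[X]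
  set H : K[X] := hpol.map (algebraMap D K) with hH
  have hinj : Function.Injective (algebraMap D K) := IsFractionRing.injective D K
  have hHne : H ≠ 0 := (Polynomial.map_ne_zero_iff hinj).mpr hpol0
  -- upper to zero construction: each prime divisor of H yields a unit-content multiple
  have upper : ∀ p : K[X], Prime p → p ∣ H →
      ∃ gp : D[X], cI gp = ⊤ ∧ p ∣ gp.map (algebraMap D K) := by
    intro p hprime hdvd
    haveI hsp : (Ideal.span {p}).IsPrime := (Ideal.span_singleton_prime hprime.ne_zero).mpr hprime
    set Q : Ideal D[X] :=
      (Ideal.span {p}).comap (Polynomial.mapRingHom (algebraMap D K)) with hQ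
    haveI hQprime : Q.IsPrime := Ideal.IsPrime.comap _
    have hhpQ : hpol ∈ Q := by
      rw [hQ, Ideal.mem_comap, Polynomial.coe_mapRingHom, Ideal.mem_span_singleton]
      exact hdvd
    have hcQ : contentIdealOfIdeal Q = ⊤ := by
      by_contra hne
      have hQeq := hqp Q hQprime hne
      have hbot : Q.comap (Polynomial.C : D →+* D[X]) = ⊥ := by
        refine le_antisymm ?_ bot_le
        intro b hb
        rw [Ideal.mem_comap, hQ, Ideal.mem_comap, Polynomial.coe_mapRingHom,
          Polynomial.map_C, Ideal.mem_span_singleton] at hb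
        rw [Ideal.mem_bot]
        by_contra hb0
        have hbne : algebraMap D K b ≠ 0 := fun h =>
          hb0 (hinj (by rw [h, map_zero]))
        have hunit : IsUnit (Polynomial.C (algebraMap D K b)) :=
          Polynomial.isUnit_C.mpr (isUnit_iff_ne_zero.mpr hbne)
        exact hprime.not_unit (isUnit_of_dvd_unit hb hunit)
      rw [hbot, Ideal.map_bot] at hQeq
      rw [hQeq] at hhpQ
      exact hpol0 (Ideal.mem_bot.mp hhpQ)
    -- extract a single polynomial with unit content
    have h1mem : (1 : D) ∈ Ideal.span {a : D | ∃ f ∈ Q, ∃ n : ℕ, f.coeff n = a} := by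
      rw [← contentIdealOfIdeal, hcQ]; trivial
    obtain ⟨t, htsub, htmem⟩ := Submodule.mem_span_finite_of_mem_span h1mem
    set FF : D → D[X] := fun b =>
      if h : ∃ f, f ∈ Q ∧ ∃ n : ℕ, f.coeff n = b then h.choose else 0 with hFF
    have hFFQ : ∀ b, FF b ∈ Q := by
      intro b
      by_cases h : ∃ f, f ∈ Q ∧ ∃ n : ℕ, f.coeff n = b
      · have heq : FF b = h.choose := dif_pos h
        rw [heq]; exact h.choose_spec.1
      · have heq : FF b = 0 := dif_neg h
        rw [heq]; exact Q.zero_mem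
    set l : List D[X] := t.toList.map FF with hl
    obtain ⟨gp, hgpQ, hgp⟩ := exists_shift_combine Q l
      (by intro f hf; obtain ⟨b, _, rfl⟩ := List.mem_map.mp hf; exact hFFQ b)
    refine ⟨gp, ?_, ?_⟩
    · rw [Ideal.eq_top_iff_one]
      have hspanle : Ideal.span (↑t : Set D) ≤ cI gp := by
        refine Ideal.span_le.mpr ?_
        intro b hb
        have h : ∃ f, f ∈ Q ∧ ∃ n : ℕ, f.coeff n = b := htsub hb
        have hmem : FF b ∈ l := List.mem_map.mpr ⟨b, Finset.mem_toList.mpr hb, rfl⟩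
        obtain ⟨n, hn⟩ : ∃ n : ℕ, (FF b).coeff n = b := by
          have heq : FF b = h.choose := dif_pos h
          rw [heq]; exact h.choose_spec.2
        obtain ⟨k, hk⟩ := hgp (FF b) hmem n
        exact Ideal.subset_span ⟨k, by rw [hk, hn]⟩
      exact hspanle htmem
    · rw [← Ideal.mem_span_singleton, ← Polynomial.coe_mapRingHom, ← Ideal.mem_comap]
      exact hgpQ
  -- combine over all prime factors of H
  have exg : ∀ ps : Multiset K[X], (∀ p ∈ ps, Prime p ∧ p ∣ H) →
      ∃ g : D[X], cI g = ⊤ ∧ ps.prod ∣ g.map (algebraMap D K) := by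
    intro ps
    induction ps using Multiset.induction_on with
    | empty =>
      intro _
      refine ⟨1, ?_, by simp⟩
      rw [Ideal.eq_top_iff_one]
      exact Ideal.subset_span ⟨0, Polynomial.coeff_one_zero⟩
    | cons p ps ih =>
      intro hmem
      obtain ⟨g', hg'top, hg'dvd⟩ := ih fun r hr => hmem r (Multiset.mem_cons_of_mem hr)
      obtain ⟨hpr, hpd⟩ := hmem p (Multiset.mem_cons_self p ps)
      obtain ⟨gp, hgptop, hgpdvd⟩ := upper p hpr hpd
      refine ⟨gp * g', cI_mul_top hgptop hg'top, ?_⟩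
      rw [Polynomial.map_mul, Multiset.prod_cons]
      exact mul_dvd_mul hgpdvd hg'dvd
  obtain ⟨g, hgtop, hgdvd⟩ := exg (UniqueFactorizationMonoid.factors H)
    (fun p hp => ⟨UniqueFactorizationMonoid.prime_of_factor p hp,
      dvd_trans (Multiset.dvd_prod hp) (UniqueFactorizationMonoid.factors_prod hHne).dvd⟩)
  obtain ⟨u, hu⟩ := (UniqueFactorizationMonoid.factors_prod hHne)
  obtain ⟨w, hw⟩ := hgdvd
  set q : K[X] := ((u⁻¹ : K[X]ˣ) : K[X]) * w with hq
  have E : H * q = g.map (algebraMap D K) := by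
    rw [hw]
    calc H * q = ((UniqueFactorizationMonoid.factors H).prod * (u : K[X])) *
          (((u⁻¹ : K[X]ˣ) : K[X]) * w) := by rw [hq, hu]
      _ = (UniqueFactorizationMonoid.factors H).prod * w := by
          rw [mul_assoc, ← mul_assoc ((u : K[X])), Units.mul_inv, one_mul]
  -- the denominator ideal J
  set J : Ideal D :=
    { carrier := {δ : D | ∀ n : ℕ, ∃ d : D, algebraMap D K d = algebraMap D K δ * q.coeff n}
      add_mem' := by
        rintro δ₁ δ₂ h₁ h₂ n
        obtain ⟨d₁, hd₁⟩ := h₁ n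
        obtain ⟨d₂, hd₂⟩ := h₂ n
        exact ⟨d₁ + d₂, by rw [map_add, map_add, hd₁, hd₂, add_mul]⟩
      zero_mem' := fun n => ⟨0, by rw [map_zero, zero_mul]⟩
      smul_mem' := by
        rintro c δ h n
        obtain ⟨d, hd⟩ := h n
        refine ⟨c * d, ?_⟩
        rw [smul_eq_mul, map_mul, map_mul, hd, mul_assoc] } with hJ
  have hJmem : ∀ δ : D, δ ∈ J ↔
      (∀ n : ℕ, ∃ d : D, algebraMap D K d = algebraMap D K δ * q.coeff n) := fun δ => Iff.rfl
  -- Cramer: all window determinants lie in J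
  set e : ℕ := q.natDegree with he
  set Amat : ℕ → Matrix (Fin (e + 1)) (Fin (e + 1)) D := fun r j' j =>
    if (j : ℕ) ≤ r + (j' : ℕ) then hpol.coeff (r + (j' : ℕ) - (j : ℕ)) else 0 with hAmat
  have hdetJ : ∀ r : ℕ, (Amat r).det ∈ J := by
    intro r
    set B : Matrix (Fin (e + 1)) (Fin (e + 1)) K :=
      (algebraMap D K).mapMatrix (Amat r) with hB
    set xv : Fin (e + 1) → K := fun j => q.coeff (j : ℕ) with hxv
    set cv : Fin (e + 1) → K := fun j' => algebraMap D K (g.coeff (r + (j' : ℕ))) with hcv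
    have claim1 : Matrix.mulVec B xv = cv := by
      funext j'
      have hc : cv j' = (H * q).coeff (r + (j' : ℕ)) := by
        rw [hcv, E, Polynomial.coeff_map]
      rw [hc, coeff_mul_eq_sum_range H q (le_refl e) (r + (j' : ℕ))]
      rw [Matrix.mulVec, dotProduct]
      rw [← Fin.sum_univ_eq_sum_range
        (fun j => (if j ≤ r + (j' : ℕ) then H.coeff (r + (j' : ℕ) - j) else 0) * q.coeff j)]
      refine Finset.sum_congr rfl ?_
      intro j _
      congr 1
      rw [hB, RingHom.mapMatrix_apply, Matrix.map_apply]; simp only [hAmat]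
      by_cases hj : (j : ℕ) ≤ r + (j' : ℕ)
      · rw [if_pos hj, if_pos hj, hH, Polynomial.coeff_map]
      · rw [if_neg hj, if_neg hj, map_zero]
    have claim2 : (B.det) • xv = Matrix.mulVec (Matrix.adjugate B) cv := by
      rw [← claim1, Matrix.mulVec_mulVec, Matrix.adjugate_mul, Matrix.smul_mulVec,
        Matrix.one_mulVec]
    rw [hJmem]
    intro n
    by_cases hn : n ≤ e
    · have hj : (⟨n, by omega⟩ : Fin (e + 1)) = (⟨n, by omega⟩ : Fin (e + 1)) := rfl
      have := congrFun claim2 ⟨n, by omega⟩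
      simp only [Pi.smul_apply, smul_eq_mul] at this
      refine ⟨∑ j' : Fin (e + 1), (Matrix.adjugate (Amat r)) ⟨n, by omega⟩ j' *
        g.coeff (r + (j' : ℕ)), ?_⟩
      have hdet : B.det = algebraMap D K ((Amat r).det) := by
        rw [hB, (algebraMap D K).map_det]
      have hadj : Matrix.adjugate B = (algebraMap D K).mapMatrix (Matrix.adjugate (Amat r)) := by
        rw [hB, (algebraMap D K).map_adjugate]
      rw [map_sum]
      have hxvn : xv ⟨n, by omega⟩ = q.coeff n := rfl
      rw [← hxvn, ← hdet, this, Matrix.mulVec, dotProduct]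
      refine Finset.sum_congr rfl ?_
      intro j' _
      rw [map_mul, hadj, RingHom.mapMatrix_apply, Matrix.map_apply, hcv]
    · refine ⟨0, ?_⟩
      rw [map_zero, Polynomial.coeff_eq_zero_of_natDegree_lt (by omega), mul_zero]
  -- radical step : G = cI hpol ≤ radical J
  have hrad : G ≤ J.radical := by
    rw [← hspan, Ideal.radical_eq_sInf]
    refine le_sInf ?_
    rintro P ⟨hJP, hPprime⟩
    by_contra hnle
    obtain ⟨i0, hi0⟩ : ∃ i, hpol.coeff i ∉ P := by
      by_contra hall
      push_neg at hall
      exact hnle (cI_le_iff.mpr hall)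
    set Sf := hpol.support.filter (fun i => hpol.coeff i ∉ P) with hSf
    have hSne : Sf.Nonempty := ⟨i0, Finset.mem_filter.mpr
      ⟨Polynomial.mem_support_iff.mpr (fun h0 => hi0 (h0 ▸ P.zero_mem)), hi0⟩⟩
    set r := Sf.max' hSne with hr
    have hrP : hpol.coeff r ∉ P := (Finset.mem_filter.mp (Sf.max'_mem hSne)).2
    have hgt : ∀ i, r < i → hpol.coeff i ∈ P := by
      intro i hi
      by_contra hiP
      have hmem : i ∈ Sf := Finset.mem_filter.mpr
        ⟨Polynomial.mem_support_iff.mpr (fun h0 => hiP (h0 ▸ P.zero_mem)), hiP⟩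
      exact absurd (Sf.le_max' i hmem) (not_le.mpr hi)
    have hdetP : (Amat r).det ∈ P := hJP (hdetJ r)
    haveI := hPprime
    set π := Ideal.Quotient.mk P with hπ
    have htri : ((π : D →+* D ⧸ P).mapMatrix (Amat r)).det = (π (hpol.coeff r)) ^ (e + 1) := by
      rw [Matrix.det_of_upperTriangular]
      · have hdiag : ∀ j : Fin (e + 1),
            ((π : D →+* D ⧸ P).mapMatrix (Amat r)) j j = π (hpol.coeff r) := by
          intro j
          rw [RingHom.mapMatrix_apply, Matrix.map_apply]; simp only [hAmat]
          have : (j : ℕ) ≤ r + (j : ℕ) := Nat.le_add_left _ _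
          rw [if_pos this]
          have harg : r + (j : ℕ) - (j : ℕ) = r := by omega
          rw [harg]
        rw [Finset.prod_congr rfl (fun j _ => hdiag j), Finset.prod_const, Finset.card_univ,
          Fintype.card_fin]
      · intro i j hij
        rw [RingHom.mapMatrix_apply, Matrix.map_apply]; simp only [hAmat]
        have hij' : (j : ℕ) < (i : ℕ) := hij
        rw [if_pos (by omega)]
        exact Ideal.Quotient.eq_zero_iff_mem.mpr (hgt _ (by omega))
    have : π ((Amat r).det) = 0 := Ideal.Quotient.eq_zero_iff_mem.mpr hdetP
    rw [(π : D →+* D ⧸ P).map_det, htri] at this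
    exact hrP (Ideal.Quotient.eq_zero_iff_mem.mp (pow_eq_zero_iff (by omega) |>.mp this))
  obtain ⟨N, hN⟩ := Ideal.exists_pow_le_of_le_radical_of_fg hrad hGfg
  -- all coefficients of q come from D
  have hqcoeff : ∀ n : ℕ, q.coeff n ∈ Set.range (algebraMap D K) := by
    intro n
    obtain ⟨d, hd⟩ := key2 N (q.coeff n) (by
      intro w hw
      obtain ⟨d, hd⟩ := (hJmem w).mp (hN hw) n
      exact ⟨d, by rw [hd]; ring⟩)
    exact ⟨d, hd⟩
  obtain ⟨q'', hq''⟩ := (Polynomial.mem_lifts q).mp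
    ((Polynomial.lifts_iff_coeff_lifts q).mpr hqcoeff)
  have hmapinj : Function.Injective (Polynomial.map (algebraMap D K) : D[X] → K[X]) :=
    Polynomial.map_injective _ hinj
  have hg_eq : hpol * q'' = g := by
    apply hmapinj
    rw [Polynomial.map_mul, hq'', ← hH, E]
  have htopM : (⊤ : Ideal D) ≤ M := by
    rw [← hgtop, ← hg_eq]
    refine cI_le_iff.mpr ?_
    intro n
    rw [Polynomial.coeff_mul]
    exact Ideal.sum_mem _ fun c hc => hGM (Ideal.mul_mem_right _ _ (hcoeff_mem c.1))
  exact hM.ne_top (top_le_iff.mp htopM)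
end

section
/- Let D be an integral domain with quotient field K, let h ∈ D[X] be a nonzero polynomial, and suppose that for every irreducible factor ℓ of h in K[X] the upper to zero ℓK[X] ∩ D[X] contains a nonzero polynomial of content with ⋆-closure equal to D^⋆. Then there exists a nonzero polynomial g ∈ hK[X] ∩ D[X] with c(g)^⋆ = D^⋆. -/
/-- A semistar operation on `D` (with quotient field `K`) in the sense of Okabe–Matsuda. -/
structure SemistarOp (D K : Type*) [CommRing D] [Field K] [Algebra D K] where
  op : Submodule D K → Submodule D K
  le_op : ∀ E : Submodule D K, E ≠ ⊥ → E ≤ op E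
  mono : ∀ E F : Submodule D K, E ≠ ⊥ → E ≤ F → op E ≤ op F
  idem : ∀ E : Submodule D K, E ≠ ⊥ → op (op E) = op E
  smul : ∀ (x : K) (E : Submodule D K), x ≠ 0 → E ≠ ⊥ →
    op (Submodule.map (LinearMap.mulLeft D x) E)
      = Submodule.map (LinearMap.mulLeft D x) (op E)

/-- The content ideal of a polynomial: the ideal generated by its coefficients. -/
def contentIdeal {D : Type*} [CommRing D] (f : Polynomial D) : Ideal D :=
  Ideal.span {a : D | ∃ n : ℕ, f.coeff n = a}

section Aux

variable {D K : Type*} [CommRing D] [IsDomain D] [Field K] [Algebra D K] [IsFractionRing D K]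

/-- Extension of an ideal of `D` to a `D`-submodule of `K`. -/
noncomputable def eIdeal (I : Ideal D) : Submodule D K :=
  Submodule.map (Algebra.linearMap D K) I

lemma eIdeal_top : (eIdeal ⊤ : Submodule D K) = 1 := by
  rw [eIdeal, Submodule.map_top, Submodule.one_eq_range]

lemma eIdeal_le_one (I : Ideal D) : (eIdeal I : Submodule D K) ≤ 1 := by
  rw [← eIdeal_top]; exact Submodule.map_mono le_top

lemma eIdeal_ne_bot {I : Ideal D} (hI : I ≠ ⊥) : (eIdeal I : Submodule D K) ≠ ⊥ := by
  rw [Submodule.ne_bot_iff] at hI ⊢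
  obtain ⟨x, hxI, hx⟩ := hI
  refine ⟨algebraMap D K x, ⟨x, hxI, rfl⟩, ?_⟩
  rw [Ne, IsFractionRing.to_map_eq_zero_iff]
  exact hx

lemma eIdeal_mul (I J : Ideal D) :
    (eIdeal (I * J) : Submodule D K) = eIdeal I * eIdeal J := by
  have h : (Algebra.ofId D K).toLinearMap = Algebra.linearMap D K := rfl
  simpa only [eIdeal, h] using Submodule.map_mul I J (Algebra.ofId D K)

lemma eIdeal_mono {I J : Ideal D} (h : I ≤ J) :
    (eIdeal I : Submodule D K) ≤ eIdeal J :=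
  Submodule.map_mono h

lemma one_ne_bot : (1 : Submodule D K) ≠ ⊥ := by
  rw [Submodule.ne_bot_iff]
  refine ⟨1, ?_, one_ne_zero⟩
  rw [Submodule.one_eq_range]
  exact ⟨1, by simp [Algebra.linearMap_apply]⟩

lemma submodule_mul_ne_bot {E F : Submodule D K} (hE : E ≠ ⊥) (hF : F ≠ ⊥) : E * F ≠ ⊥ := by
  rw [Submodule.ne_bot_iff] at hE hF ⊢
  obtain ⟨x, hx, hx0⟩ := hE
  obtain ⟨y, hy, hy0⟩ := hF
  exact ⟨x * y, Submodule.mul_mem_mul hx hy, mul_ne_zero hx0 hy0⟩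

variable (s : SemistarOp D K)

lemma op_ne_bot {E : Submodule D K} (hE : E ≠ ⊥) : s.op E ≠ ⊥ := by
  intro h
  exact hE (le_bot_iff.mp (h ▸ s.le_op E hE))

/-- Key lemma: `E^⋆ F ≤ (EF)^⋆`. -/
lemma op_mul_le (E F : Submodule D K) (hE : E ≠ ⊥) (hF : F ≠ ⊥) :
    s.op E * F ≤ s.op (E * F) := by
  rw [Submodule.mul_le]
  intro x hx f hf
  by_cases hf0 : f = 0
  · subst hf0; rw [mul_zero]; exact zero_mem _
  · have h1 : x * f ∈ Submodule.map (LinearMap.mulLeft D f) (s.op E) :=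
      ⟨x, hx, by simp [LinearMap.mulLeft_apply, mul_comm]⟩
    rw [← s.smul f E hf0 hE] at h1
    have hmap : Submodule.map (LinearMap.mulLeft D f) E ≠ ⊥ := by
      rw [Submodule.ne_bot_iff] at hE ⊢
      obtain ⟨y, hy, hy0⟩ := hE
      exact ⟨f * y, ⟨y, hy, rfl⟩, mul_ne_zero hf0 hy0⟩
    have h2 : Submodule.map (LinearMap.mulLeft D f) E ≤ E * F := by
      rintro _ ⟨y, hy, rfl⟩
      simpa [LinearMap.mulLeft_apply, mul_comm] using Submodule.mul_mem_mul hy hf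
    exact s.mono _ _ hmap h2 h1

/-- Product of two ⋆-trivial submodules is ⋆-trivial. -/
lemma op_mul_triv {E F : Submodule D K} (hE : E ≠ ⊥) (hF : F ≠ ⊥)
    (hE1 : E ≤ 1) (hF1 : F ≤ 1)
    (hEop : s.op E = s.op 1) (hFop : s.op F = s.op 1) :
    s.op (E * F) = s.op 1 := by
  have hEF : E * F ≠ ⊥ := submodule_mul_ne_bot hE hF
  apply le_antisymm
  · refine s.mono _ _ hEF ?_
    calc E * F ≤ 1 * 1 := mul_le_mul' hE1 hF1
      _ = 1 := one_mul 1
  · have hopE : s.op E ≠ ⊥ := op_ne_bot s hE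
    have h1 : s.op E * F ≤ s.op (E * F) := op_mul_le s E F hE hF
    have hopEF : s.op E * F ≠ ⊥ := submodule_mul_ne_bot hopE hF
    have h3 : s.op (s.op E * F) ≤ s.op (E * F) := by
      have := s.mono _ _ hopEF h1
      rwa [s.idem _ hEF] at this
    have h2 : s.op F * s.op E ≤ s.op (F * s.op E) := op_mul_le s F (s.op E) hF hopE
    have h4 : s.op F * s.op E ≤ s.op (E * F) := by
      refine le_trans h2 ?_
      rw [mul_comm F (s.op E)]
      exact h3
    have m1 : (1 : K) ∈ s.op E := by
      rw [hEop]
      refine s.le_op 1 one_ne_bot ?_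
      rw [Submodule.one_eq_range]; exact ⟨1, by simp [Algebra.linearMap_apply]⟩
    have m2 : (1 : K) ∈ s.op F := by
      rw [hFop]
      refine s.le_op 1 one_ne_bot ?_
      rw [Submodule.one_eq_range]; exact ⟨1, by simp [Algebra.linearMap_apply]⟩
    have h5 : (1 : K) ∈ s.op (E * F) := by
      have := Submodule.mul_mem_mul m2 m1
      rw [one_mul] at this
      exact h4 this
    have h6 : (1 : Submodule D K) ≤ s.op (E * F) := by
      rw [Submodule.one_eq_span, Submodule.span_singleton_le_iff_mem]
      exact h5
    have := s.mono _ _ one_ne_bot h6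
    rwa [s.idem _ hEF] at this

end Aux

section Content

variable {D : Type*} [CommRing D]

lemma coeff_mem_contentIdeal (f : Polynomial D) (n : ℕ) : f.coeff n ∈ contentIdeal f :=
  Ideal.subset_span ⟨n, rfl⟩

lemma contentIdeal_le_iff {f : Polynomial D} {I : Ideal D} :
    contentIdeal f ≤ I ↔ ∀ n, f.coeff n ∈ I := by
  rw [contentIdeal, Ideal.span_le]
  constructor
  · intro h n; exact h ⟨n, rfl⟩
  · rintro h a ⟨n, rfl⟩; exact h n

lemma contentIdeal_ne_bot {f : Polynomial D} (hf : f ≠ 0) : contentIdeal f ≠ ⊥ := by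
  rw [Submodule.ne_bot_iff]
  exact ⟨f.coeff f.natDegree, coeff_mem_contentIdeal f _, by
    rwa [Polynomial.coeff_natDegree, Ne, Polynomial.leadingCoeff_eq_zero]⟩

lemma contentIdeal_one : contentIdeal (1 : Polynomial D) = ⊤ := by
  rw [Ideal.eq_top_iff_one]
  simpa using coeff_mem_contentIdeal (1 : Polynomial D) 0

lemma contentIdeal_fg (f : Polynomial D) : (contentIdeal f).FG := by
  classical
  refine ⟨insert 0 f.coeffs, ?_⟩
  rw [contentIdeal]
  congr 1
  ext a
  simp only [Finset.coe_insert, Set.mem_insert_iff, Finset.mem_coe,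
    Polynomial.mem_coeffs_iff, Set.mem_setOf_eq]
  constructor
  · rintro (rfl | ⟨n, _, rfl⟩)
    · exact ⟨f.natDegree + 1, Polynomial.coeff_eq_zero_of_natDegree_lt (Nat.lt_succ_self _)⟩
    · exact ⟨n, rfl⟩
  · rintro ⟨n, rfl⟩
    by_cases h : f.coeff n = 0
    · exact Or.inl h
    · exact Or.inr ⟨n, Polynomial.mem_support_iff.mpr h, rfl⟩

/-- Gauss–Joyal: `c(f)c(g) ⊆ √c(fg)`. -/
lemma contentIdeal_mul_le_radical [IsDomain D] (f g : Polynomial D) :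
    contentIdeal f * contentIdeal g ≤ (contentIdeal (f * g)).radical := by
  rw [Ideal.radical_eq_sInf]
  refine le_sInf ?_
  rintro P ⟨hle, hP⟩
  have hfg0 : (f * g).map (Ideal.Quotient.mk P) = 0 := by
    ext n
    rw [Polynomial.coeff_map, Polynomial.coeff_zero, Ideal.Quotient.eq_zero_iff_mem]
    exact hle (coeff_mem_contentIdeal _ n)
  rw [Polynomial.map_mul] at hfg0
  rcases mul_eq_zero.mp hfg0 with h | h
  · refine le_trans Ideal.mul_le_left ?_
    rw [contentIdeal_le_iff]
    intro n
    rw [← Ideal.Quotient.eq_zero_iff_mem]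
    have := congrArg (fun p => Polynomial.coeff p n) h
    simpa [Polynomial.coeff_map] using this
  · refine le_trans Ideal.mul_le_right ?_
    rw [contentIdeal_le_iff]
    intro n
    rw [← Ideal.Quotient.eq_zero_iff_mem]
    have := congrArg (fun p => Polynomial.coeff p n) h
    simpa [Polynomial.coeff_map] using this

end Content

section Main

variable {D K : Type*} [CommRing D] [IsDomain D] [Field K] [Algebra D K] [IsFractionRing D K]

/-- ⋆-trivial contents are preserved by polynomial multiplication. -/
lemma op_content_mul (s : SemistarOp D K) {f g : Polynomial D} (hf : f ≠ 0) (hg : g ≠ 0)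
    (Hf : s.op (eIdeal (contentIdeal f)) = s.op (eIdeal (⊤ : Ideal D)))
    (Hg : s.op (eIdeal (contentIdeal g)) = s.op (eIdeal (⊤ : Ideal D))) :
    s.op (eIdeal (contentIdeal (f * g))) = s.op (eIdeal (⊤ : Ideal D)) := by
  rw [eIdeal_top] at Hf Hg ⊢
  set cf := contentIdeal f with hcf
  set cg := contentIdeal g with hcg
  have hcf0 : cf ≠ ⊥ := contentIdeal_ne_bot hf
  have hcg0 : cg ≠ ⊥ := contentIdeal_ne_bot hg
  have hI0 : cf * cg ≠ ⊥ := by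
    rw [Ne, Ideal.mul_eq_bot]
    tauto
  -- the product ideal is ⋆-trivial
  have hIop : s.op (eIdeal (cf * cg) : Submodule D K) = s.op 1 := by
    rw [eIdeal_mul]
    exact op_mul_triv s (eIdeal_ne_bot hcf0) (eIdeal_ne_bot hcg0)
      (eIdeal_le_one _) (eIdeal_le_one _) Hf Hg
  -- powers of it are ⋆-trivial
  have hpow : ∀ N : ℕ, (cf * cg) ^ N ≠ ⊥ ∧
      s.op (eIdeal ((cf * cg) ^ N) : Submodule D K) = s.op 1 := by
    intro N
    induction N with
    | zero =>
      constructor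
      · rw [pow_zero, Ideal.one_eq_top]
        exact top_ne_bot
      · rw [pow_zero, Ideal.one_eq_top, eIdeal_top]
    | succ n ih =>
      obtain ⟨ih1, ih2⟩ := ih
      constructor
      · rw [pow_succ, Ne, Ideal.mul_eq_bot]
        tauto
      · rw [pow_succ, eIdeal_mul]
        exact op_mul_triv s (eIdeal_ne_bot ih1) (eIdeal_ne_bot hI0)
          (eIdeal_le_one _) (eIdeal_le_one _) ih2 hIop
  -- Gauss–Joyal plus finite generation: some power is inside c(fg)
  obtain ⟨N, hN⟩ := Ideal.exists_pow_le_of_le_radical_of_fg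
    (contentIdeal_mul_le_radical f g) (Submodule.FG.mul (contentIdeal_fg f) (contentIdeal_fg g))
  obtain ⟨hN0, hNop⟩ := hpow N
  have hfg0 : contentIdeal (f * g) ≠ ⊥ := contentIdeal_ne_bot (mul_ne_zero hf hg)
  apply le_antisymm
  · exact s.mono _ _ (eIdeal_ne_bot hfg0) (eIdeal_le_one _)
  · calc s.op (1 : Submodule D K) = s.op (eIdeal ((cf * cg) ^ N)) := hNop.symm
      _ ≤ s.op (eIdeal (contentIdeal (f * g))) :=
        s.mono _ _ (eIdeal_ne_bot hN0) (eIdeal_mono hN)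

end Main

/-- if for every irreducible factor `ℓ` of `h` in `K[X]` the upper to zero
`ℓK[X] ∩ D[X]` contains a nonzero polynomial whose content has `⋆`-closure `D^⋆`, then
`hK[X] ∩ D[X]` contains a nonzero polynomial whose content has `⋆`-closure `D^⋆`. -/
theorem exists_poly_in_hK_with_star_content
    (D K : Type*) [CommRing D] [IsDomain D] [Field K] [Algebra D K] [IsFractionRing D K]
    (s : SemistarOp D K) (h : Polynomial D) (hh : h ≠ 0)
    (hyp : ∀ ℓ : Polynomial K, Irreducible ℓ → ℓ ∣ h.map (algebraMap D K) →
      ∃ g : Polynomial D, g ≠ 0 ∧ g.map (algebraMap D K) ∈ Ideal.span {ℓ} ∧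
        s.op (Submodule.map (Algebra.linearMap D K) (contentIdeal g))
          = s.op (Submodule.map (Algebra.linearMap D K) (⊤ : Ideal D))) :
    ∃ g : Polynomial D, g ≠ 0 ∧ h.map (algebraMap D K) ∣ g.map (algebraMap D K) ∧
      s.op (Submodule.map (Algebra.linearMap D K) (contentIdeal g))
        = s.op (Submodule.map (Algebra.linearMap D K) (⊤ : Ideal D)) := by
  classical
  have inj : Function.Injective (algebraMap D K) := IsFractionRing.injective D K
  have hK0 : h.map (algebraMap D K) ≠ 0 := (Polynomial.map_ne_zero_iff inj).mpr hh
  have key : ∀ t : Multiset (Polynomial K),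
      (∀ ℓ ∈ t, Irreducible ℓ ∧ ℓ ∣ h.map (algebraMap D K)) →
      ∃ g : Polynomial D, g ≠ 0 ∧ t.prod ∣ g.map (algebraMap D K) ∧
        s.op (Submodule.map (Algebra.linearMap D K) (contentIdeal g))
          = s.op (Submodule.map (Algebra.linearMap D K) (⊤ : Ideal D)) := by
    intro t
    induction t using Multiset.induction with
    | empty =>
      intro _
      exact ⟨1, one_ne_zero, by simp, by rw [contentIdeal_one]⟩
    | cons ℓ tl ih =>
      intro ht
      obtain ⟨hirr, hdvd⟩ := ht ℓ (Multiset.mem_cons_self ℓ tl)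
      obtain ⟨g₁, hg₁0, hg₁mem, hg₁st⟩ := hyp ℓ hirr hdvd
      obtain ⟨g₂, hg₂0, hg₂dvd, hg₂st⟩ := ih (fun x hx => ht x (Multiset.mem_cons_of_mem hx))
      refine ⟨g₁ * g₂, mul_ne_zero hg₁0 hg₂0, ?_, op_content_mul s hg₁0 hg₂0 hg₁st hg₂st⟩
      rw [Multiset.prod_cons, Polynomial.map_mul]
      exact mul_dvd_mul (Ideal.mem_span_singleton.mp hg₁mem) hg₂dvd
  obtain ⟨g, hg0, hdvd, hst⟩ := key (UniqueFactorizationMonoid.factors (h.map (algebraMap D K)))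
    (fun ℓ hℓ => ⟨UniqueFactorizationMonoid.irreducible_of_factor ℓ hℓ,
      UniqueFactorizationMonoid.dvd_of_mem_factors hℓ⟩)
  exact ⟨g, hg0,
    dvd_trans (UniqueFactorizationMonoid.factors_prod hK0).symm.dvd hdvd, hst⟩
end
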